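/- Weighted truncation error: let t ≥ 1 be an integer. Then for every integer i ≥ 1, the truncated weighted power-sum sequence satisfies |P̃_{i,M} − P_{i,M}| ≤ i · (t + 1) · C · a_{t+1}. -/

import Mathlib

/-!
Put `E i = P̃_i - P_i`. Newton's identities, cut off after `t` terms, hold for the true power sums
up to a remainder: `P_i - Σ_{n ≤ t} (-1)^(n-1) a_n P_{i-n} = (-1)^t Σ_j m_j p_j^(i-t) e_t(p ∖ p_j)`,
where `e_t(p ∖ p_j)` omits `p_j`. Since `Σ_j p_j e_t(p ∖ p_j) = (t+1) a_{t+1}`, this remainder is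
at most `B = (t+1) C a_{t+1}` in absolute value. Hence `E` vanishes for `i ≤ t` and satisfies the
truncated recurrence up to an error of size at most `B`.

The coefficients `(-1)^(n-1) a_n` of that recurrence alternate in sign, but substituting the
recurrence for `E (i-1)` into the one for `E i` (using `a_1 = Σ p_j = 1`) expresses `E i` through
`E (i-2), …, E (i-t-1)` with coefficients of absolute values `a_1 - a_2, …, a_t - a_{t+1}, a_{t+1}`.
These are nonnegative, because `(n+1) a_{n+1} = Σ_j p_j e_n(p ∖ p_j) ≤ a_n`, and they sum to
`a_1 = 1`. So `|E i| ≤ max_{j ≤ i-2} |E j| + 2B`, and `|E i| ≤ i B` follows by induction.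
-/

open Finset

theorem Multiset.esymm_cons_succ {R : Type*} [CommSemiring R] (a : R) (s : Multiset R) (n : ℕ) :
    (a ::ₘ s).esymm (n + 1) = s.esymm (n + 1) + a * s.esymm n := by
  simp [esymm, powersetCard_cons, map_map, sum_map_mul_left]

namespace Finset

variable {ι R : Type*}

section CommSemiring

variable [CommSemiring R] (s : Finset ι) (p : ι → R)

def esymm (n : ℕ) : R := ∑ T ∈ s.powersetCard n, ∏ j ∈ T, p j

theorem esymm_zero : s.esymm p 0 = 1 := by simp [esymm]

theorem esymm_one : s.esymm p 1 = ∑ j ∈ s, p j := by simp [esymm, powersetCard_one]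

@[simp]
theorem esymm_empty_succ (n : ℕ) : (∅ : Finset ι).esymm p (n + 1) = 0 := by
  rw [esymm, powersetCard_eq_empty.2 (Nat.succ_pos n), sum_empty]

variable [DecidableEq ι]

theorem esymm_insert_succ {j : ι} (hj : j ∉ s) (n : ℕ) :
    (insert j s).esymm p (n + 1) = s.esymm p (n + 1) + p j * s.esymm p n := by
  simp only [esymm, ← esymm_map_val, insert_val_of_notMem hj, Multiset.map_cons,
    Multiset.esymm_cons_succ]

theorem esymm_succ_of_mem {j : ι} (hj : j ∈ s) (n : ℕ) :
    s.esymm p (n + 1) = (s.erase j).esymm p (n + 1) + p j * (s.erase j).esymm p n := by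
  rw [← esymm_insert_succ _ p (notMem_erase j s), insert_erase hj]

theorem sum_mul_esymm_erase (n : ℕ) :
    ∑ j ∈ s, p j * (s.erase j).esymm p n = (n + 1) * s.esymm p (n + 1) := by
  induction s using Finset.induction_on generalizing n with
  | empty => simp
  | insert x s hx ih =>
    have herase : ∀ j ∈ s, (insert x s).erase j = insert x (s.erase j) := fun j hj =>
      erase_insert_of_ne (ne_of_mem_of_not_mem hj hx).symm
    rw [sum_insert hx, erase_insert hx, sum_congr rfl fun j hj => by rw [herase j hj],
      esymm_insert_succ s p hx]
    cases n with
    | zero =>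
      simp only [esymm_zero, mul_one, Nat.cast_zero, zero_add, one_mul]
      rw [esymm_one, add_comm]
    | succ n =>
      have hx' : ∀ j, x ∉ s.erase j := fun j => notMem_mono (erase_subset j s) hx
      simp only [esymm_insert_succ _ p (hx' _), mul_add, sum_add_distrib,
        mul_left_comm (p _) (p x), ← mul_sum, ih]
      push_cast
      ring

end CommSemiring

section OrderedSemiring

variable [CommSemiring R] [PartialOrder R] [IsOrderedRing R] (s : Finset ι) {p : ι → R}

theorem esymm_nonneg (hp : ∀ j ∈ s, 0 ≤ p j) (n : ℕ) : 0 ≤ s.esymm p n :=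
  sum_nonneg fun _ hT => prod_nonneg fun j hj => hp j (mem_powersetCard.1 hT |>.1 hj)

theorem esymm_le_of_subset {s' : Finset ι} (hs : s' ⊆ s) (hp : ∀ j ∈ s, 0 ≤ p j) (n : ℕ) :
    s'.esymm p n ≤ s.esymm p n :=
  sum_le_sum_of_subset_of_nonneg (powersetCard_mono hs) fun _ hT _ =>
    prod_nonneg fun j hj => hp j (mem_powersetCard.1 hT |>.1 hj)

variable [DecidableEq ι]

theorem esymm_succ_le (hp : ∀ j ∈ s, 0 ≤ p j) (hsum : ∑ j ∈ s, p j ≤ 1) (n : ℕ) :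
    s.esymm p (n + 1) ≤ s.esymm p n := by
  have hcount : (n + 1) * s.esymm p (n + 1) ≤ s.esymm p n :=
    calc (n + 1) * s.esymm p (n + 1) = ∑ j ∈ s, p j * (s.erase j).esymm p n :=
          (sum_mul_esymm_erase s p n).symm
      _ ≤ ∑ j ∈ s, p j * s.esymm p n :=
          sum_le_sum fun j hj => mul_le_mul_of_nonneg_left
            (esymm_le_of_subset s (erase_subset j s) hp n) (hp j hj)
      _ ≤ s.esymm p n := by
          rw [← sum_mul]
          exact mul_le_of_le_one_left (esymm_nonneg s hp n) hsum
  have := esymm_nonneg s hp (n + 1)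
  calc s.esymm p (n + 1) ≤ (n + 1) * s.esymm p (n + 1) :=
        le_mul_of_one_le_left this (le_add_of_nonneg_left n.cast_nonneg)
    _ ≤ _ := hcount

end OrderedSemiring

end Finset

/-- Newton's recurrence `P_i = Σ_{n ≥ 1} (-1)^(n-1) e_n P_{i-n}` for power sums, cut off after
`t` terms. -/
def truncatedNewton {R : Type*} [CommRing R] (t : ℕ) (a P : ℕ → R) (i : ℕ) : R :=
  ∑ n ∈ Icc 1 t, (-1) ^ (n - 1) * a n * P (i - n)

section TruncatedNewton

variable {R : Type*} [CommRing R] {t : ℕ} {a : ℕ → R}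

theorem truncatedNewton_sub (P Q : ℕ → R) (i : ℕ) :
    truncatedNewton t a (P - Q) i = truncatedNewton t a P i - truncatedNewton t a Q i := by
  simp only [truncatedNewton, Pi.sub_apply, mul_sub, sum_sub_distrib]

theorem truncatedNewton_eq_sum_range (P : ℕ → R) (i : ℕ) :
    truncatedNewton t a P i = ∑ k ∈ range t, (-1) ^ k * a (k + 1) * P (i - 1 - k) := by
  rw [truncatedNewton, ← Ico_add_one_right_eq_Icc, sum_Ico_eq_sum_range, Nat.add_sub_cancel]
  refine sum_congr rfl fun k _ => ?_
  rw [Nat.add_sub_cancel_left, Nat.sub_sub, add_comm 1 k]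

theorem truncatedNewton_succ (P : ℕ → R) (i : ℕ) :
    truncatedNewton (t + 1) a P i
      = truncatedNewton t a P i + (-1) ^ t * a (t + 1) * P (i - (t + 1)) := by
  rw [truncatedNewton, sum_Icc_succ_top (by omega), Nat.add_sub_cancel, truncatedNewton]

theorem truncatedNewton_const_mul (c : R) (P : ℕ → R) (i : ℕ) :
    truncatedNewton t a (fun k => c * P k) i = c * truncatedNewton t a P i := by
  rw [truncatedNewton, truncatedNewton, mul_sum]
  exact sum_congr rfl fun n _ => by ring

theorem truncatedNewton_finset_sum {ι : Type*} (s : Finset ι) (P : ι → ℕ → R) (i : ℕ) :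
    truncatedNewton t a (fun k => ∑ j ∈ s, P j k) i = ∑ j ∈ s, truncatedNewton t a (P j) i := by
  simp only [truncatedNewton, mul_sum]
  exact sum_comm

theorem truncatedNewton_pow_add (x : R) (d : ℕ) :
    truncatedNewton t a (x ^ ·) (t + d) = x ^ d * truncatedNewton t a (x ^ ·) t := by
  rw [truncatedNewton, truncatedNewton, mul_sum]
  refine sum_congr rfl fun n hn => ?_
  rw [Nat.sub_add_comm (mem_Icc.1 hn).2, pow_add]
  ring

end TruncatedNewton

namespace Finset

variable {ι R : Type*} [DecidableEq ι] (s : Finset ι)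

section CommRing

variable [CommRing R] (p : ι → R)

theorem pow_sub_truncatedNewton_esymm {j : ι} (hj : j ∈ s) (T : ℕ) :
    p j ^ T - truncatedNewton T (s.esymm p) (p j ^ ·) T = (-1) ^ T * (s.erase j).esymm p T := by
  induction T with
  | zero => simp [truncatedNewton, esymm_zero]
  | succ T ih =>
    rw [truncatedNewton_succ, truncatedNewton_pow_add, esymm_succ_of_mem s p hj, Nat.sub_self,
      pow_zero]
    linear_combination p j * ih

theorem sum_mul_pow_sub_truncatedNewton_esymm (m : ι → R) {t i : ℕ} (hti : t ≤ i) :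
    ∑ j ∈ s, m j * p j ^ i - truncatedNewton t (s.esymm p) (fun k => ∑ j ∈ s, m j * p j ^ k) i
      = (-1) ^ t * ∑ j ∈ s, m j * p j ^ (i - t) * (s.erase j).esymm p t := by
  obtain ⟨d, rfl⟩ := Nat.exists_eq_add_of_le hti
  rw [truncatedNewton_finset_sum, ← sum_sub_distrib, mul_sum, Nat.add_sub_cancel_left]
  refine sum_congr rfl fun j hj => ?_
  rw [truncatedNewton_const_mul, truncatedNewton_pow_add]
  linear_combination m j * p j ^ d * pow_sub_truncatedNewton_esymm s p hj t

end CommRing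

section LinearOrderedRing

variable [CommRing R] [LinearOrder R] [IsStrictOrderedRing R] {p : ι → R}

theorem abs_sub_truncatedNewton_esymm_le {m : ι → R} {P : ℕ → R} {C : R}
    (hP : ∀ k, 1 ≤ k → P k = ∑ j ∈ s, m j * p j ^ k) (hm : ∀ j ∈ s, |m j| ≤ C)
    (hp0 : ∀ j ∈ s, 0 ≤ p j) (hp1 : ∀ j ∈ s, p j ≤ 1) {t i : ℕ} (hti : t < i) :
    |P i - truncatedNewton t (s.esymm p) P i| ≤ (t + 1) * C * s.esymm p (t + 1) := by
  have hPi : truncatedNewton t (s.esymm p) P i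
      = truncatedNewton t (s.esymm p) (fun k => ∑ j ∈ s, m j * p j ^ k) i :=
    sum_congr rfl fun n hn => by rw [hP _ (by have := mem_Icc.1 hn; omega)]
  rw [hPi, hP i (by omega), sum_mul_pow_sub_truncatedNewton_esymm s p m hti.le, abs_mul,
    abs_neg_one_pow, one_mul, mul_comm _ C, mul_assoc, ← sum_mul_esymm_erase, mul_sum]
  refine (abs_sum_le_sum_abs _ _).trans (sum_le_sum fun j hj => ?_)
  have he := esymm_nonneg (s.erase j) (fun k hk => hp0 k (mem_of_mem_erase hk)) t
  rw [abs_mul, abs_mul, abs_of_nonneg he, abs_of_nonneg (pow_nonneg (hp0 j hj) _)]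
  calc |m j| * p j ^ (i - t) * (s.erase j).esymm p t
      ≤ |m j| * p j * (s.erase j).esymm p t := by
        gcongr
        exact pow_le_of_le_one (hp0 j hj) (hp1 j hj) (by omega)
    _ ≤ C * (p j * (s.erase j).esymm p t) := by
        rw [← mul_assoc]
        exact mul_le_mul_of_nonneg_right (mul_le_mul_of_nonneg_right (hm j hj) (hp0 j hj)) he

end LinearOrderedRing

end Finset

section TruncatedRecurrence

theorem eq_truncatedNewton_two_step {R : Type*} [CommRing R] {t : ℕ} {a E F : ℕ → R}
    (ha1 : a 1 = 1) (hrec : ∀ i, t < i → E i = truncatedNewton t a E i - F i) {i : ℕ}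
    (hi : t + 1 < i) :
    E i = ∑ k ∈ range t, (-1) ^ k * (a (k + 1) - a (k + 2)) * E (i - 2 - k)
      - (-1) ^ t * a (t + 1) * E (i - 1 - t) - (F i + F (i - 1)) := by
  have h1 := hrec i (by omega)
  have h2 := hrec (i - 1) (by omega)
  rw [truncatedNewton_eq_sum_range] at h1 h2
  have hshift := sum_range_succ' (fun k => (-1) ^ k * a (k + 1) * E (i - 1 - k)) t
  rw [sum_range_succ, ha1] at hshift
  have hS2 : ∑ k ∈ range t, (-1) ^ k * a (k + 1) * E (i - 1 - 1 - k)
      = ∑ k ∈ range t, (-1) ^ k * a (k + 1) * E (i - 2 - k) :=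
    sum_congr rfl fun k _ => by rw [show i - 1 - 1 - k = i - 2 - k by omega]
  have hS3 : ∑ k ∈ range t, (-1) ^ (k + 1) * a (k + 1 + 1) * E (i - 1 - (k + 1))
      = -∑ k ∈ range t, (-1) ^ k * a (k + 2) * E (i - 2 - k) := by
    rw [← sum_neg_distrib]
    exact sum_congr rfl fun k _ => by rw [show i - 1 - (k + 1) = i - 2 - k by omega]; ring
  have hsplit : ∑ k ∈ range t, (-1) ^ k * (a (k + 1) - a (k + 2)) * E (i - 2 - k)
      = ∑ k ∈ range t, (-1) ^ k * a (k + 1) * E (i - 2 - k)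
        - ∑ k ∈ range t, (-1) ^ k * a (k + 2) * E (i - 2 - k) := by
    rw [← sum_sub_distrib]
    exact sum_congr rfl fun k _ => by ring
  rw [hS2] at h2
  rw [hS3] at hshift
  rw [hsplit]
  linear_combination h1 + hshift + h2

variable {R : Type*} [CommRing R] [LinearOrder R] [IsStrictOrderedRing R] {t : ℕ}
  {a E F : ℕ → R} {B : R}

theorem abs_le_mul_of_two_step (ht : 1 ≤ t) (ha1 : a 1 = 1) (hanti : Antitone a)
    (hat : 0 ≤ a (t + 1)) (hrec : ∀ i, t < i → E i = truncatedNewton t a E i - F i)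
    (hF : ∀ i, t < i → |F i| ≤ B) {i : ℕ} (hi : t + 1 < i)
    (hprev : ∀ j, 1 ≤ j → j < i → |E j| ≤ j * B) :
    |E i| ≤ i * B := by
  have hB : 0 ≤ B := (abs_nonneg _).trans (hF (t + 1) t.lt_succ_self)
  have hprev' : ∀ j, 1 ≤ j → j + 2 ≤ i → |E j| ≤ (i - 2) * B := fun j hj hji =>
    (hprev j hj (by omega)).trans <| mul_le_mul_of_nonneg_right
      (le_sub_iff_add_le.2 (by exact_mod_cast hji)) hB
  have hS : |∑ k ∈ range t, (-1) ^ k * (a (k + 1) - a (k + 2)) * E (i - 2 - k)|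
      ≤ ∑ k ∈ range t, (a (k + 1) - a (k + 2)) * ((i - 2) * B) := by
    refine (abs_sum_le_sum_abs _ _).trans (sum_le_sum fun k hk => ?_)
    have hw : 0 ≤ a (k + 1) - a (k + 2) := sub_nonneg.2 (hanti (Nat.le_succ _))
    rw [abs_mul, abs_mul, abs_neg_one_pow, one_mul, abs_of_nonneg hw]
    exact mul_le_mul_of_nonneg_left (hprev' _ (by have := mem_range.1 hk; omega) (by omega)) hw
  have hX : |(-1) ^ t * a (t + 1) * E (i - 1 - t)| ≤ a (t + 1) * ((i - 2) * B) := by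
    rw [abs_mul, abs_mul, abs_neg_one_pow, one_mul, abs_of_nonneg hat]
    exact mul_le_mul_of_nonneg_left (hprev' _ (by omega) (by omega)) hat
  rw [eq_truncatedNewton_two_step ha1 hrec hi]
  calc _ ≤ ∑ k ∈ range t, (a (k + 1) - a (k + 2)) * ((i - 2) * B) + a (t + 1) * ((i - 2) * B)
        + (B + B) := by
        refine (abs_sub _ _).trans (add_le_add ((abs_sub _ _).trans (add_le_add hS hX)) ?_)
        exact (abs_add_le _ _).trans (add_le_add (hF _ (by omega)) (hF _ (by omega)))
    _ = i * B := by
        rw [← sum_mul, sum_range_sub' (fun k => a (k + 1)), ha1]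
        ring

theorem abs_le_mul_of_eq_truncatedNewton_sub (ht : 1 ≤ t) (ha1 : a 1 = 1) (hanti : Antitone a)
    (hat : 0 ≤ a (t + 1)) (hE : ∀ i, 1 ≤ i → i ≤ t → E i = 0)
    (hrec : ∀ i, t < i → E i = truncatedNewton t a E i - F i) (hF : ∀ i, t < i → |F i| ≤ B) :
    ∀ i, 1 ≤ i → |E i| ≤ i * B := by
  have hB : 0 ≤ B := (abs_nonneg _).trans (hF (t + 1) t.lt_succ_self)
  intro i
  induction i using Nat.strong_induction_on with
  | _ i ih =>
  intro hi
  rcases le_or_gt i t with hit | hti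
  · rw [hE i hi hit, abs_zero]
    positivity
  rcases (Nat.succ_le_of_lt hti).eq_or_lt with rfl | hti'
  · have h0 : truncatedNewton t a E (t + 1) = 0 := sum_eq_zero fun n hn => by
      have := mem_Icc.1 hn
      rw [hE _ (by omega) (by omega), mul_zero]
    rw [hrec _ hti, h0, zero_sub, abs_neg]
    exact (hF _ hti).trans (le_mul_of_one_le_left hB (by simp))
  · exact abs_le_mul_of_two_step ht ha1 hanti hat hrec hF hti' fun j hj hji => ih j hji hj

end TruncatedRecurrence

theorem weighted_truncation_error_general
    (r t : ℕ) (ht : 1 ≤ t) (C : ℝ)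
    (p : Fin r → ℝ) (hp : ∀ j, 0 ≤ p j) (hpsum : ∑ j, p j = 1)
    (m : Fin r → ℝ) (hm : ∀ j, |m j| ≤ C)
    (PM : ℕ → ℝ) (hPM : ∀ i, 1 ≤ i → PM i = ∑ j, m j * p j ^ i)
    (a : ℕ → ℝ)
    (ha : ∀ n, a n = ∑ S ∈ Finset.powersetCard n (Finset.univ : Finset (Fin r)),
      ∏ j ∈ S, p j)
    (PtM : ℕ → ℝ) (hPtM1 : ∀ i, 1 ≤ i → i ≤ t → PtM i = PM i)
    (hPtM2 : ∀ i, t < i →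
      PtM i = ∑ n ∈ Icc 1 t, (-1 : ℝ) ^ (n - 1) * a n * PtM (i - n)) :
    ∀ i, 1 ≤ i →
      |PtM i - PM i| ≤ (i : ℝ) * ((t : ℝ) + 1) * C * a (t + 1) := by
  obtain rfl : a = univ.esymm p := funext ha
  have hp0 : ∀ j ∈ univ, 0 ≤ p j := fun j _ => hp j
  have hp1 : ∀ j ∈ univ, p j ≤ 1 := fun j _ => hpsum ▸ single_le_sum hp0 (mem_univ j)
  have hrec : ∀ i, t < i → (PtM - PM) i
      = truncatedNewton t (univ.esymm p) (PtM - PM) i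
        - (PM i - truncatedNewton t (univ.esymm p) PM i) := fun i hi => by
    rw [truncatedNewton_sub, Pi.sub_apply,
      show truncatedNewton t (univ.esymm p) PtM i = PtM i from (hPtM2 i hi).symm]
    ring
  intro i hi
  simpa only [Pi.sub_apply, mul_assoc] using abs_le_mul_of_eq_truncatedNewton_sub ht
    (by rw [esymm_one, hpsum]) (antitone_nat_of_succ_le (esymm_succ_le univ hp0 hpsum.le))
    (esymm_nonneg univ hp0 _) (fun i h1 h2 => by simp [hPtM1 i h1 h2]) hrec
    (fun i hti => abs_sub_truncatedNewton_esymm_le univ hPM (fun j _ => hm j) hp0 hp1 hti) i hi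

/-- Weighted truncation error: for `t ≥ 1`, the truncated weighted
power-sum sequence satisfies `|P̃M i - PM i| ≤ i (t+1) C a (t+1)` for every
`i ≥ 1`. -/
theorem weighted_truncation_error
    (r t : ℕ) (hr : 1 ≤ r) (ht : 1 ≤ t) (C : ℝ) (hC : 0 < C)
    (p : Fin r → ℝ) (hp : ∀ j, 0 ≤ p j) (hpsum : ∑ j, p j = 1)
    (m : Fin r → ℝ) (hm : ∀ j, |m j| ≤ C)
    (PM : ℕ → ℝ) (hPM : ∀ i, 1 ≤ i → PM i = ∑ j, m j * p j ^ i)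
    (a : ℕ → ℝ)
    (ha : ∀ n, a n = ∑ S ∈ Finset.powersetCard n (Finset.univ : Finset (Fin r)),
      ∏ j ∈ S, p j)
    (PtM : ℕ → ℝ) (hPtM1 : ∀ i, 1 ≤ i → i ≤ t → PtM i = PM i)
    (hPtM2 : ∀ i, t < i →
      PtM i = ∑ n ∈ Icc 1 t, (-1 : ℝ) ^ (n - 1) * a n * PtM (i - n)) :
    ∀ i, 1 ≤ i →
      |PtM i - PM i| ≤ (i : ℝ) * ((t : ℝ) + 1) * C * a (t + 1) :=
  weighted_truncation_error_general r t ht C p hp hpsum m hm PM hPM a ha PtM hPtM1 hPtM2
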